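/- Let G be a connected infinite graph and (T, (P_t)) a tree-decomposition of G of finite adhesion such that along every ray t₁t₂… of T the adhesion sets W_i = V(P_{t_i}) ∩ V(P_{t_{i+1}}) are pairwise disjoint, nonempty and finite, and every vertex of W_{i+1} is separated from a fixed root vertex v by W_i. Then for every end τ of T there is an end of G living in τ. -/

import Mathlib

namespace Paper

variable {V : Type*} {ι : Type*}

def edgeVerts (X : Set (Sym2 V)) : Set V := {v | ∃ e ∈ X, v ∈ e}

def ecompl (G : SimpleGraph V) (X : Set (Sym2 V)) : Set (Sym2 V) := G.edgeSet \ X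

def bdry (G : SimpleGraph V) (X : Set (Sym2 V)) : Set V :=
  {v | (∃ e ∈ X, v ∈ e) ∧ ∃ e ∈ ecompl G X, v ∈ e}

def Nested (G : SimpleGraph V) (X Y : Set (Sym2 V)) : Prop :=
  X ⊆ Y ∨ ecompl G X ⊆ Y ∨ Y ⊆ X ∨ Y ⊆ ecompl G X

def ReachOutside (G : SimpleGraph V) (S : Set V) (u v : V) : Prop :=
  ∃ p : G.Walk u v, ∀ x ∈ p.support, x ∉ S

def IsCompOutside (G : SimpleGraph V) (S : Set V) (C : Set V) : Prop :=
  ∃ v, v ∉ S ∧ C = {u | ReachOutside G S u v}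

def sEdges (G : SimpleGraph V) (C : Set V) : Set (Sym2 V) :=
  {e | e ∈ G.edgeSet ∧ ∃ v ∈ C, v ∈ e}

def IsRay (G : SimpleGraph V) (f : ℕ → V) : Prop :=
  Function.Injective f ∧ ∀ n, G.Adj (f n) (f (n + 1))

def RayEquiv (G : SimpleGraph V) (f g : ℕ → V) : Prop :=
  ∀ S : Set V, S.Finite → ∃ N, ∀ i ≥ N, ∀ j ≥ N, ReachOutside G S (f i) (g j)

def LivesIn (f : ℕ → V) (X : Set (Sym2 V)) : Prop :=
  ∃ N, ∀ n ≥ N, f n ∈ edgeVerts X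

def Dominates (G : SimpleGraph V) (v : V) (f : ℕ → V) : Prop :=
  ∃ (g : ℕ → ℕ) (p : (k : ℕ) → G.Walk v (f (g k))),
    StrictMono g ∧ (∀ k, (p k).IsPath) ∧
    ∀ k l, k ≠ l → ∀ x, x ∈ (p k).support → x ∈ (p l).support → x = v


def IsTreeDecomp (G : SimpleGraph V) (T : SimpleGraph ι) (P : ι → G.Subgraph) : Prop :=
  T.IsTree ∧
  (∀ v : V, ∃ t, v ∈ (P t).verts) ∧
  (∀ e ∈ G.edgeSet, ∃! t, e ∈ (P t).edgeSet) ∧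
  ∀ (v : V) (t u : ι) (p : T.Walk t u), p.IsPath → v ∈ (P t).verts → v ∈ (P u).verts →
    ∀ w ∈ p.support, v ∈ (P w).verts

def FiniteAdhesion (G : SimpleGraph V) (T : SimpleGraph ι) (P : ι → G.Subgraph) : Prop :=
  ∀ t u, T.Adj t u → ((P t).verts ∩ (P u).verts).Finite

def treeSep (G : SimpleGraph V) (T : SimpleGraph ι) (P : ι → G.Subgraph) (t u : ι) :
    Set (Sym2 V) :=
  {e | ∃ w, ReachOutside T {t} w u ∧ e ∈ (P w).edgeSet}

/-!
Each `x ∈ W (i + 1)` is joined to `W i` by following a walk from `x` towards `v` until it first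
meets `W i`; as the tree-decomposition separates along the edge `t i t (i + 1)`, this walk uses
only edges of parts beyond that edge. König's lemma for the finite sets `W i` yields compatible
choices `x i ∈ W i`, and the walks concatenate to an infinite walk `x 0 → x 1 → ⋯`. A vertex
lies beyond the edge `t i t (i + 1)` for only finitely many `i` (far out it would lie in `W i`,
and the `W i` are disjoint), so this walk visits every vertex finitely often. Hence it contains
a ray, which eventually stays beyond every edge of `t`.
-/

open SimpleGraph CategoryTheory Opposite

theorem exists_seq_of_finite_inverse_system {X : ℕ → Type*} [∀ i, Finite (X i)]
    [∀ i, Nonempty (X i)] (σ : ∀ i, X (i + 1) → X i) :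
    ∃ x : ∀ i, X i, ∀ i, σ i (x (i + 1)) = x i := by
  let F : ℕᵒᵖ ⥤ Type _ := Functor.ofOpSequence fun i => TypeCat.ofHom (σ i)
  have : ∀ j, Finite (F.obj j) := fun j => inferInstanceAs (Finite (X j.unop))
  have : ∀ j, Nonempty (F.obj j) := fun j => inferInstanceAs (Nonempty (X j.unop))
  obtain ⟨u, hu⟩ := nonempty_sections_of_finite_inverse_system F
  refine ⟨fun i => u (op i), fun i => ?_⟩
  have h := hu (homOfLE (Nat.le_add_right i 1)).op
  rw [Functor.ofOpSequence_map_homOfLE_succ] at h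
  exact h

section Walks

variable {G : SimpleGraph V}

theorem exists_isPath_to_first_mem {S : Set V} {a b : V} (p : G.Walk a b)
    (hS : ∃ c ∈ p.support, c ∈ S) :
    ∃ y ∈ S, ∃ q : G.Walk a y, q.IsPath ∧ ∀ c ∈ q.support, c ∈ S → c = y := by
  classical
  suffices ∃ y ∈ S, ∃ q : G.Walk a y, ∀ c ∈ q.support, c ∈ S → c = y by
    obtain ⟨y, hy, q, hq⟩ := this
    exact ⟨y, hy, q.bypass, q.bypass_isPath,
      fun c hc => hq c (q.support_bypass_subset_support hc)⟩
  induction p with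
  | nil =>
    simp only [Walk.support_nil, List.mem_singleton, exists_eq_left] at hS
    exact ⟨_, hS, .nil, by simp⟩
  | @cons a a' b h p ih =>
    by_cases ha : a ∈ S
    · exact ⟨a, ha, .nil, by simp⟩
    · obtain ⟨y, hy, q, hq⟩ := ih (by simpa [ha] using hS)
      refine ⟨y, hy, .cons h q, fun c hc hcS => ?_⟩
      rcases List.mem_cons.mp (Walk.support_cons h q ▸ hc) with rfl | hc
      · exact absurd hcS ha
      · exact hq c hc hcS

/-- A walk visiting every vertex only finitely often contains a ray: jump from each vertex to
the step after its last visit. -/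
theorem exists_isRay_comp_of_finite_fibers {g : ℕ → V} (hadj : ∀ n, G.Adj (g n) (g (n + 1)))
    (hfin : ∀ u, {n | g n = u}.Finite) :
    ∃ m : ℕ → ℕ, (∀ k, k ≤ m k) ∧ IsRay G (g ∘ m) := by
  set last : V → ℕ := fun u => sSup {n | g n = u}
  have g_last : ∀ n, g (last (g n)) = g n := fun n =>
    Nat.sSup_mem (s := {k | g k = g n}) ⟨n, rfl⟩ (hfin _).bddAbove
  have le_last : ∀ n, n ≤ last (g n) := fun n => le_csSup (hfin _).bddAbove rfl
  set m : ℕ → ℕ := fun k => Nat.rec 0 (fun _ j => last (g j) + 1) k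
  have m_succ : ∀ k, m (k + 1) = last (g (m k)) + 1 := fun _ => rfl
  have last_strictMono : StrictMono fun k => last (g (m k)) :=
    strictMono_nat_of_lt_succ fun k =>
      (by rw [m_succ]; exact Nat.lt_succ_self _ : last (g (m k)) < m (k + 1)).trans_le (le_last _)
  refine ⟨m, fun k => ?_, fun a b h => last_strictMono.injective (congrArg last h), fun k => ?_⟩
  · induction k with
    | zero => exact le_rfl
    | succ k ih => rw [m_succ]; linarith [le_last (m k)]
  · simpa [m_succ, g_last] using hadj (last (g (m k)))

end Walks

section InfiniteConcat

variable {G : SimpleGraph V} {x : ℕ → V} (s : ∀ i, G.Walk (x i) (x (i + 1)))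

def prefixWalk : ∀ n, G.Walk (x 0) (x n)
  | 0 => .nil
  | n + 1 => (prefixWalk n).append (s n)

theorem length_prefixWalk_succ (n : ℕ) :
    (prefixWalk s (n + 1)).length = (prefixWalk s n).length + (s n).length :=
  Walk.length_append _ _

theorem getVert_prefixWalk_of_le {m n k : ℕ} (hmn : m ≤ n)
    (hk : k ≤ (prefixWalk s m).length) :
    (prefixWalk s n).getVert k = (prefixWalk s m).getVert k := by
  induction n, hmn using Nat.le_induction with
  | base => rfl
  | succ n hmn ih =>
    have hlen : (prefixWalk s m).length ≤ (prefixWalk s n).length := by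
      clear ih
      induction n, hmn using Nat.le_induction with
      | base => rfl
      | succ n _ ih => rw [length_prefixWalk_succ]; omega
    rw [prefixWalk, Walk.getVert_append', if_pos (hk.trans hlen), ih]

variable {s}

theorem strictMono_length_prefixWalk (hpos : ∀ i, 0 < (s i).length) :
    StrictMono fun n => (prefixWalk s n).length :=
  strictMono_nat_of_lt_succ fun n => by rw [length_prefixWalk_succ]; linarith [hpos n]

variable (s)

/-- The vertex sequence of the infinite walk `s 0, s 1, …`. -/
def concatVert (k : ℕ) : V := (prefixWalk s (k + 1)).getVert k

variable {s}

theorem concatVert_eq_getVert (hpos : ∀ i, 0 < (s i).length) {n k : ℕ}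
    (hk : k ≤ (prefixWalk s n).length) : concatVert s k = (prefixWalk s n).getVert k := by
  have hk' : k ≤ (prefixWalk s (k + 1)).length :=
    (Nat.le_succ k).trans ((strictMono_length_prefixWalk hpos).le_apply)
  rcases le_total n (k + 1) with h | h
  · exact getVert_prefixWalk_of_le s h hk
  · exact (getVert_prefixWalk_of_le s h hk').symm

theorem adj_concatVert (hpos : ∀ i, 0 < (s i).length) (k : ℕ) :
    G.Adj (concatVert s k) (concatVert s (k + 1)) := by
  have hk : k + 1 ≤ (prefixWalk s (k + 1)).length := (strictMono_length_prefixWalk hpos).le_apply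
  rw [concatVert_eq_getVert hpos (n := k + 1) (by omega), concatVert_eq_getVert hpos hk]
  exact Walk.adj_getVert_succ _ (by omega)

theorem exists_concatVert_mem_edge (hpos : ∀ i, 0 < (s i).length) (k : ℕ) :
    ∃ i, (prefixWalk s i).length ≤ k ∧ k < (prefixWalk s (i + 1)).length ∧
      ∃ e ∈ (s i).edges, concatVert s k ∈ e := by
  have hmono := strictMono_length_prefixWalk hpos
  have hex : ∃ i, k < (prefixWalk s (i + 1)).length := ⟨k, hmono.le_apply⟩
  set i := Nat.find hex
  have hlo : (prefixWalk s i).length ≤ k := by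
    rcases Nat.eq_zero_or_eq_succ_pred i with h | h
    · rw [h]; exact Nat.zero_le k
    · rw [h]; exact not_lt.mp (Nat.find_min hex (by omega))
  have hhi : k < (prefixWalk s (i + 1)).length := Nat.find_spec hex
  have hj : k - (prefixWalk s i).length < (s i).length := by
    rw [length_prefixWalk_succ] at hhi; omega
  refine ⟨i, hlo, hhi, _, List.getElem_mem (by rwa [Walk.length_edges]), ?_⟩
  rw [Walk.getElem_edges, concatVert_eq_getVert hpos hhi.le, prefixWalk, Walk.getVert_append,
    if_neg (by omega)]
  exact Sym2.mem_mk_left _ _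

theorem exists_isRay_livesIn_of_walks (hpos : ∀ i, 0 < (s i).length) {E : ℕ → Set (Sym2 V)}
    (hE : Antitone E) (hs : ∀ i, ∀ e ∈ (s i).edges, e ∈ E i)
    (hfin : ∀ u, {i | u ∈ edgeVerts (E i)}.Finite) :
    ∃ f : ℕ → V, IsRay G f ∧ ∀ n, LivesIn f (E n) := by
  have hmono := strictMono_length_prefixWalk hpos
  have mem_edgeVerts : ∀ k, ∃ i, (prefixWalk s i).length ≤ k ∧
      k < (prefixWalk s (i + 1)).length ∧ concatVert s k ∈ edgeVerts (E i) := by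
    intro k
    obtain ⟨i, hlo, hhi, e, he, hke⟩ := exists_concatVert_mem_edge hpos k
    exact ⟨i, hlo, hhi, e, hs i e he, hke⟩
  have hfibers : ∀ u, {k | concatVert s k = u}.Finite := by
    intro u
    obtain ⟨M, hM⟩ := (hfin u).bddAbove
    refine (Set.finite_Iio (prefixWalk s (M + 1)).length).subset fun k hk => ?_
    obtain ⟨i, -, hhi, hi⟩ := mem_edgeVerts k
    have hiM : i ≤ M := hM (show u ∈ edgeVerts (E i) from hk ▸ hi)
    exact hhi.trans_le (hmono.monotone (by omega))
  obtain ⟨m, hm, hray⟩ := exists_isRay_comp_of_finite_fibers (adj_concatVert hpos) hfibers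
  refine ⟨_, hray, fun n => ⟨(prefixWalk s n).length, fun k hk => ?_⟩⟩
  obtain ⟨i, -, hhi, hi⟩ := mem_edgeVerts (m k)
  have hni : n ≤ i := by
    by_contra! h
    have := hmono.monotone (by omega : i + 1 ≤ n)
    linarith [hm k]
  obtain ⟨e, he, hke⟩ := hi
  exact ⟨e, hE hni he, hke⟩

end InfiniteConcat

section RayInTree

variable {T : SimpleGraph ι} {t : ℕ → ι}

theorem IsAcyclic.mem_support_of_mem_path (hT : T.IsAcyclic) {a b c : ι} {p : T.Walk a b}
    (hp : p.IsPath) (hc : c ∈ p.support) (q : T.Walk a b) : c ∈ q.support := by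
  classical
  have hpq : p = q.bypass :=
    congrArg Subtype.val ((hT.subsingleton_path a b).elim ⟨p, hp⟩ ⟨_, q.bypass_isPath⟩)
  exact q.support_bypass_subset_support (hpq ▸ hc)

def rayWalk (ht : ∀ n, T.Adj (t n) (t (n + 1))) : ∀ k, T.Walk (t 0) (t k)
  | 0 => .nil
  | k + 1 => (rayWalk ht k).concat (ht k)

theorem support_rayWalk (ht : ∀ n, T.Adj (t n) (t (n + 1))) (k : ℕ) :
    (rayWalk ht k).support = (List.range (k + 1)).map t := by
  induction k with
  | zero => rfl
  | succ k ih =>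
    rw [rayWalk, Walk.support_concat, ih, List.range_succ (n := k + 1), List.map_append]
    rfl

theorem IsRay.shift (ht : IsRay T t) (i : ℕ) : IsRay T fun n => t (i + n) :=
  ⟨fun a b h => by simpa using ht.1 h, fun n => ht.2 (i + n)⟩

theorem IsRay.mem_support_of_le (hT : T.IsAcyclic) (ht : IsRay T t) {j k : ℕ} (hjk : j ≤ k)
    (q : T.Walk (t 0) (t k)) : t j ∈ q.support := by
  refine IsAcyclic.mem_support_of_mem_path hT (p := rayWalk ht.2 k) ?_ ?_ q
  · rw [Walk.isPath_def, support_rayWalk]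
    exact List.nodup_range.map ht.1
  · rw [support_rayWalk]
    exact List.mem_map_of_mem (List.mem_range.mpr (by omega))

/-- `treeSep G T P (t i) (t (i + 1))` consists of the edges of the parts `P w` with
`Beyond T t i w`. -/
def Beyond (T : SimpleGraph ι) (t : ℕ → ι) (i : ℕ) (w : ι) : Prop :=
  ReachOutside T {t i} w (t (i + 1))

theorem beyond_succ_self (ht : IsRay T t) (i : ℕ) : Beyond T t i (t (i + 1)) := by
  refine ⟨.nil, fun x hx h => ?_⟩
  rw [Walk.support_nil, List.mem_singleton] at hx
  rw [hx, Set.mem_singleton_iff] at h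
  exact absurd (ht.1 h) (by omega)

theorem Beyond.of_succ (hT : T.IsAcyclic) (ht : IsRay T t) {i : ℕ} {w : ι}
    (h : Beyond T t (i + 1) w) : Beyond T t i w := by
  classical
  obtain ⟨r, hr⟩ := h
  have hti : t i ∉ r.support := fun hmem =>
    hr _ (r.support_dropUntil_subset_support hmem
      ((ht.shift i).mem_support_of_le hT (by norm_num : 1 ≤ 2) (r.dropUntil _ hmem))) rfl
  refine ⟨r.concat (ht.2 (i + 1)).symm, fun x hx h => ?_⟩
  rw [Walk.support_concat, List.mem_append, List.mem_singleton] at hx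
  rw [Set.mem_singleton_iff] at h
  rcases hx with hx | rfl
  · exact hti (h ▸ hx)
  · exact absurd (ht.1 h) (by omega)

theorem Beyond.of_le (hT : T.IsAcyclic) (ht : IsRay T t) {i j : ℕ} {w : ι} (hij : i ≤ j)
    (h : Beyond T t j w) : Beyond T t i w := by
  induction j, hij using Nat.le_induction with
  | base => exact h
  | succ j _ ih => exact ih (h.of_succ hT ht)

/-- A walk from `t 0` to `w` would have to pass through every `t (i + 1)` if `w` were beyond
all edges of the ray. -/
theorem eventually_not_beyond (hT : T.IsTree) (ht : IsRay T t) (w : ι) :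
    ∀ᶠ i in Filter.atTop, ¬ Beyond T t i w := by
  obtain ⟨I, hI⟩ : ∃ I, ¬ Beyond T t I w := by
    by_contra! h
    obtain ⟨q⟩ := hT.connected.preconnected (t 0) w
    have hmem : ∀ i, t (i + 1) ∈ q.support := fun i => by
      obtain ⟨r, hr⟩ := h (i + 1)
      have := ht.mem_support_of_le hT.isAcyclic (Nat.le_succ (i + 1)) (q.append r)
      rcases (Walk.mem_support_append_iff _ _).mp this with h | h
      · exact h
      · exact absurd rfl (hr _ h)
    exact q.support.finite_toSet.not_infinite <| Set.infinite_of_injective_forall_mem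
      (fun a b hab => by simpa using ht.1 hab) hmem
  exact Filter.eventually_atTop.mpr ⟨I, fun i hi hb => hI (hb.of_le hT.isAcyclic ht hi)⟩

end RayInTree

section TreeDecomposition

variable {G : SimpleGraph V} {T : SimpleGraph ι} {P : ι → G.Subgraph} {t : ℕ → ι}

theorem treeSep_succ_subset (hT : T.IsAcyclic) (ht : IsRay T t) (i : ℕ) :
    treeSep G T P (t (i + 1)) (t (i + 2)) ⊆ treeSep G T P (t i) (t (i + 1)) :=
  fun _ ⟨w, hw, he⟩ => ⟨w, Beyond.of_succ hT ht hw, he⟩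

theorem mem_inter_of_beyond (htd : IsTreeDecomp G T P) (ht : IsRay T t) {u : V} {a b : ι}
    {i : ℕ} (ha : u ∈ (P a).verts) (hb : u ∈ (P b).verts) (hna : ¬ Beyond T t i a)
    (hfb : Beyond T t i b) : u ∈ (P (t i)).verts ∩ (P (t (i + 1))).verts := by
  classical
  obtain ⟨hT, -, -, hpart⟩ := htd
  obtain ⟨r, hr⟩ := hfb
  set p := (hT.connected.preconnected a b).some.bypass
  have hti : t i ∈ p.support := by
    by_contra hti
    refine hna ⟨p.append r, fun x hx => ?_⟩
    rcases (Walk.mem_support_append_iff _ _).mp hx with hx | hx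
    · exact fun h => hti (Set.mem_singleton_iff.mp h ▸ hx)
    · exact hr x hx
  have hui : u ∈ (P (t i)).verts := hpart u a b p (Walk.bypass_isPath _) ha hb _ hti
  have hr' : (r.bypass.concat (ht.2 i).symm).IsPath :=
    r.bypass_isPath.concat (fun h => hr _ (r.support_bypass_subset_support h) rfl) _
  exact ⟨hui, hpart u b (t i) _ hr' hb hui _
    (r.bypass.support_subset_support_concat _ r.bypass.end_mem_support)⟩

theorem edges_mem_treeSep (htd : IsTreeDecomp G T P) (ht : IsRay T t) {i : ℕ} {c y : V}
    (r : G.Walk c y) (hr : r.IsPath)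
    (hy : ∀ z ∈ r.support, z ∈ (P (t i)).verts ∩ (P (t (i + 1))).verts → z = y)
    (hc : ∃ b, Beyond T t i b ∧ c ∈ (P b).verts) :
    ∀ e ∈ r.edges, e ∈ treeSep G T P (t i) (t (i + 1)) := by
  induction r with
  | nil => simp
  | @cons c c' y h r ih =>
    obtain ⟨b, hb, hcb⟩ := hc
    obtain ⟨w, hw, -⟩ := htd.2.2.1 _ (G.mem_edgeSet.mpr h)
    have hadj := Subgraph.mem_edgeSet.mp hw
    -- otherwise `c` would lie in the adhesion set, which `r` meets only at its end
    have hbw : Beyond T t i w := by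
      by_contra hnw
      have hcy := hy _ (Walk.start_mem_support _)
        (mem_inter_of_beyond htd ht hadj.fst_mem hcb hnw hb)
      exact ((Walk.cons_isPath_iff h r).mp hr).2 (hcy ▸ r.end_mem_support)
    intro e he
    rw [Walk.edges_cons, List.mem_cons] at he
    rcases he with rfl | he
    · exact ⟨w, hbw, hw⟩
    · exact ih hr.of_cons (fun z hz => hy z (by simp [hz])) ⟨w, hbw, hadj.snd_mem⟩ e he

end TreeDecomposition

section Adhesion

variable {G : SimpleGraph V} {T : SimpleGraph ι} {P : ι → G.Subgraph} {t : ℕ → ι}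
  {W : ℕ → Set V}

theorem finite_setOf_mem_edgeVerts_treeSep (htd : IsTreeDecomp G T P) (ht : IsRay T t)
    (hW : ∀ i, W i = (P (t i)).verts ∩ (P (t (i + 1))).verts)
    (hWdisj : ∀ i j, i ≠ j → Disjoint (W i) (W j)) (u : V) :
    {i | u ∈ edgeVerts (treeSep G T P (t i) (t (i + 1)))}.Finite := by
  obtain ⟨a, ha⟩ := htd.2.1 u
  obtain ⟨I, hI⟩ := (eventually_not_beyond htd.1 ht a).exists_forall_of_atTop
  have hsub : {i | u ∈ W i}.Subsingleton := fun i hi j hj =>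
    by_contra fun hij => (hWdisj i j hij).ne_of_mem hi hj rfl
  refine ((Set.finite_Iio I).union hsub.finite).subset fun i ⟨e, ⟨w, hw, he⟩, hue⟩ => ?_
  by_cases hiI : i < I
  · exact Or.inl hiI
  · refine Or.inr (show u ∈ W i from hW i ▸ ?_)
    exact mem_inter_of_beyond htd ht ha (Subgraph.mem_verts_of_mem_edge he hue)
      (hI i (not_lt.mp hiI)) hw

theorem exists_walk_from_prev_adhesion (hconn : G.Connected) (htd : IsTreeDecomp G T P)
    (ht : IsRay T t) (hW : ∀ i, W i = (P (t i)).verts ∩ (P (t (i + 1))).verts)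
    (hWdisj : ∀ i j, i ≠ j → Disjoint (W i) (W j)) {v : V}
    (hsep : ∀ i : ℕ, ∀ x ∈ W (i + 1), ∀ p : G.Walk v x, ∃ y ∈ p.support, y ∈ W i)
    {i : ℕ} {x : V} (hx : x ∈ W (i + 1)) :
    ∃ y ∈ W i, ∃ s : G.Walk y x,
      0 < s.length ∧ ∀ e ∈ s.edges, e ∈ treeSep G T P (t i) (t (i + 1)) := by
  obtain ⟨q⟩ := hconn.preconnected v x
  obtain ⟨y, hyW, r, hr, hfirst⟩ := exists_isPath_to_first_mem q.reverse <| by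
    obtain ⟨y, hy, hyW⟩ := hsep i x hx q
    exact ⟨y, by simpa using hy, hyW⟩
  have hxy : x ≠ y := (hWdisj (i + 1) i (by omega)).ne_of_mem hx hyW
  refine ⟨y, hyW, r.reverse, ?_, fun e he => ?_⟩
  · rw [Walk.length_reverse]
    exact Nat.pos_of_ne_zero fun h => hxy (Walk.eq_of_length_eq_zero h)
  · rw [Walk.edges_reverse, List.mem_reverse] at he
    refine edges_mem_treeSep htd ht r hr (fun z hz hzW => hfirst z hz (hW i ▸ hzW))
      ⟨t (i + 1), beyond_succ_self ht i, (hW (i + 1) ▸ hx).1⟩ e he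

theorem exists_walks_through_adhesions (hconn : G.Connected) (htd : IsTreeDecomp G T P)
    (ht : IsRay T t) (hW : ∀ i, W i = (P (t i)).verts ∩ (P (t (i + 1))).verts)
    (hWfin : ∀ i, (W i).Finite) (hWne : ∀ i, (W i).Nonempty)
    (hWdisj : ∀ i j, i ≠ j → Disjoint (W i) (W j)) {v : V}
    (hsep : ∀ i : ℕ, ∀ x ∈ W (i + 1), ∀ p : G.Walk v x, ∃ y ∈ p.support, y ∈ W i) :
    ∃ (x : ℕ → V) (s : ∀ i, G.Walk (x i) (x (i + 1))), (∀ i, 0 < (s i).length) ∧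
      ∀ i, ∀ e ∈ (s i).edges, e ∈ treeSep G T P (t i) (t (i + 1)) := by
  choose y hyW s hspos hsE using fun i (x : W (i + 1)) =>
    exists_walk_from_prev_adhesion hconn htd ht hW hWdisj hsep x.2
  have := fun i => (hWfin i).to_subtype
  have := fun i => (hWne i).to_subtype
  obtain ⟨x, hx⟩ := exists_seq_of_finite_inverse_system (X := fun i => W i)
    fun i x => ⟨y i x, hyW i x⟩
  exact ⟨fun i => x i, fun i => (s i (x (i + 1))).copy (congrArg Subtype.val (hx i)) rfl,
    fun i => by simpa using hspos i (x (i + 1)),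
    fun i e he => hsE i (x (i + 1)) e (by simpa using he)⟩

end Adhesion

theorem stmt15_general (G : SimpleGraph V) (T : SimpleGraph ι) (P : ι → G.Subgraph)
    (hconn : G.Connected)
    (htd : IsTreeDecomp G T P)
    (v : V)
    (t : ℕ → ι) (ht : IsRay T t)
    (W : ℕ → Set V) (hW : ∀ i, W i = (P (t i)).verts ∩ (P (t (i + 1))).verts)
    (hWfin : ∀ i, (W i).Finite) (hWne : ∀ i, (W i).Nonempty)
    (hWdisj : ∀ i j, i ≠ j → Disjoint (W i) (W j))
    (hsep : ∀ i : ℕ, ∀ x ∈ W (i + 1), ∀ p : G.Walk v x, ∃ y ∈ p.support, y ∈ W i) :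
    ∃ f : ℕ → V, IsRay G f ∧ ∀ n, LivesIn f (treeSep G T P (t n) (t (n + 1))) := by
  obtain ⟨x, s, hpos, hs⟩ :=
    exists_walks_through_adhesions hconn htd ht hW hWfin hWne hWdisj hsep
  exact exists_isRay_livesIn_of_walks hpos
    (antitone_nat_of_succ_le (treeSep_succ_subset htd.1.isAcyclic ht)) hs
    (finite_setOf_mem_edgeVerts_treeSep htd ht hW hWdisj)

theorem stmt15 (G : SimpleGraph V) (T : SimpleGraph ι) (P : ι → G.Subgraph)
    (hconn : G.Connected) (hinf : Infinite V)
    (htd : IsTreeDecomp G T P) (hadh : FiniteAdhesion G T P)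
    (v : V)
    (t : ℕ → ι) (ht : IsRay T t)
    (W : ℕ → Set V) (hW : ∀ i, W i = (P (t i)).verts ∩ (P (t (i + 1))).verts)
    (hWfin : ∀ i, (W i).Finite) (hWne : ∀ i, (W i).Nonempty)
    (hWdisj : ∀ i j, i ≠ j → Disjoint (W i) (W j))
    (hsep : ∀ i : ℕ, ∀ x ∈ W (i + 1), ∀ p : G.Walk v x, ∃ y ∈ p.support, y ∈ W i) :
    ∃ f : ℕ → V, IsRay G f ∧ ∀ n, LivesIn f (treeSep G T P (t n) (t (n + 1))) :=
  stmt15_general G T P hconn htd v t ht W hW hWfin hWne hWdisj hsep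

end Paper
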